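/- arXiv:1502.01603 — 4 statements merged into one kernel-verified Lean document; each statement's English description precedes it below -/
import Mathlib

section
/- The function φ(z) = log(1/|z|) on the unit disk in ℂ has finite mean oscillation at the origin, while its mean values φ̃_ε(0) over B(0,ε) tend to +∞ as ε → 0. In particular, the sufficient condition limsup_{ε→0} ⨍_{B(0,ε)} |φ| dm < ∞ for FMO is not necessary. -/
open MeasureTheory Metric Filter Set
open scoped ENNReal Topology

/-- `φ` has finite mean oscillation at `z₀`. -/
def FMOAt (φ : ℂ → ℝ) (z₀ : ℂ) : Prop :=
  ∃ C : ℝ, ∀ᶠ ε in 𝓝[>] (0 : ℝ),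
    (⨍ z in ball z₀ ε, |φ z - ⨍ w in ball z₀ ε, φ w ∂volume| ∂volume) ≤ C

/-!
Write `ψ z = log (1 / ‖z‖)`. Since `ψ (r • z) = ψ z + log (1 / r)`, dilating `B(0, r)` onto
`B(0, 1)` shifts `ψ` by the constant `log (1 / r)`: the averages of `ψ` over `B(0, r)` are those
over `B(0, 1)` plus `log (1 / r) → ∞`, while the mean oscillation, which does not see additive
constants, is the same for every `r`. On the unit ball `0 ≤ ψ ≤ 2 ‖z‖ ^ (-1/2)`, so `ψ` is
integrable there and the averages of `|ψ| = ψ` are unbounded too.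
-/

open Module

theorem setAverage_add_const {α F : Type*} [MeasurableSpace α] [NormedAddCommGroup F]
    [NormedSpace ℝ F] [CompleteSpace F] {μ : Measure α} {s : Set α} {f : α → F} (hs₀ : μ s ≠ 0)
    (hs : μ s ≠ ∞) (hf : IntegrableOn f s μ) (c : F) :
    ⨍ x in s, (f x + c) ∂μ = ⨍ x in s, f x ∂μ + c := by
  have hc : IntegrableOn (fun _ => c) s μ := integrableOn_const hs
  rw [setAverage_eq, integral_add hf hc, smul_add, ← setAverage_eq, ← setAverage_eq,
    setAverage_const hs₀ hs]

noncomputable def meanOscillation {α : Type*} [MeasurableSpace α] (μ : Measure α) (s : Set α)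
    (f : α → ℝ) : ℝ :=
  ⨍ x in s, |f x - ⨍ y in s, f y ∂μ| ∂μ

section Scaling

variable {E F : Type*} [NormedAddCommGroup E] [NormedSpace ℝ E] [FiniteDimensional ℝ E]
  [MeasurableSpace E] [BorelSpace E] [Nontrivial E] [NormedAddCommGroup F] [NormedSpace ℝ F]
  (μ : Measure E) [μ.IsAddHaarMeasure] {r : ℝ}

theorem setAverage_ball_zero_eq_setAverage_comp_smul (f : E → F) (hr : 0 < r) :
    ⨍ x in ball 0 r, f x ∂μ = ⨍ x in ball 0 1, f (r • x) ∂μ := by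
  have hvol : μ.real (ball 0 r) = r ^ finrank ℝ E * μ.real (ball 0 1) := by
    rw [measureReal_def, measureReal_def, ← mul_one r, Measure.addHaar_ball_mul μ 0 hr.le,
      mul_one, ENNReal.toReal_mul, ENNReal.toReal_ofReal (by positivity)]
  rw [setAverage_eq, setAverage_eq, Measure.setIntegral_comp_smul_of_pos μ f _ hr,
    smul_unitBall_of_pos hr, smul_smul, hvol, mul_inv_rev]

variable {f : E → ℝ} {c : ℝ}

theorem setAverage_ball_zero_eq_add_of_comp_smul (hr : 0 < r)
    (hf : IntegrableOn f (ball 0 1) μ)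
    (hscale : ∀ᵐ x ∂μ.restrict (ball 0 1), f (r • x) = f x + c) :
    ⨍ x in ball 0 r, f x ∂μ = ⨍ x in ball 0 1, f x ∂μ + c := by
  rw [setAverage_ball_zero_eq_setAverage_comp_smul μ f hr, average_congr hscale,
    setAverage_add_const (measure_ball_pos μ 0 one_pos).ne' measure_ball_lt_top.ne hf]

theorem meanOscillation_ball_zero_eq_of_comp_smul (hr : 0 < r)
    (hf : IntegrableOn f (ball 0 1) μ)
    (hscale : ∀ᵐ x ∂μ.restrict (ball 0 1), f (r • x) = f x + c) :
    meanOscillation μ (ball 0 r) f = meanOscillation μ (ball 0 1) f := by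
  rw [meanOscillation, setAverage_ball_zero_eq_add_of_comp_smul μ hr hf hscale,
    setAverage_ball_zero_eq_setAverage_comp_smul μ _ hr, meanOscillation]
  refine average_congr (hscale.mono fun x hx => ?_)
  simp only [hx, add_sub_add_right_eq_sub]

end Scaling

section LogNorm

open Real

theorem log_one_div_norm_nonneg {E : Type*} [SeminormedAddGroup E] {x : E} (hx : ‖x‖ ≤ 1) :
    0 ≤ log (1 / ‖x‖) := by
  rw [one_div, log_inv, neg_nonneg]
  exact log_nonpos (norm_nonneg x) hx

variable {E : Type*} [NormedAddCommGroup E] [NormedSpace ℝ E]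

theorem log_one_div_norm_smul {r : ℝ} (hr : 0 < r) {x : E} (hx : x ≠ 0) :
    log (1 / ‖r • x‖) = log (1 / ‖x‖) + log (1 / r) := by
  rw [norm_smul, norm_of_nonneg hr.le, ← one_div_mul_one_div_rev,
    log_mul (by simpa using hx) (by simpa using hr.ne')]

theorem integrableOn_log_one_div_norm_ball [FiniteDimensional ℝ E] [Nontrivial E]
    [MeasurableSpace E] [BorelSpace E] (μ : Measure E) [μ.IsAddHaarMeasure] :
    IntegrableOn (fun x : E => log (1 / ‖x‖)) (ball 0 1) μ := by
  refine integrableOn_ball_of_norm_le_rpow (C := 2) (α := 1 / 2) finrank_pos ?_ ?_ ?_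
  · have : (1 : ℝ) ≤ finrank ℝ E := by exact_mod_cast finrank_pos
    linarith
  · filter_upwards [ae_restrict_mem measurableSet_ball] with x hx
    have hx1 : ‖x‖ ≤ 1 := (mem_ball_zero_iff.1 hx).le
    rw [norm_of_nonneg (log_one_div_norm_nonneg hx1), one_div, rpow_neg (norm_nonneg x),
      ← inv_rpow (norm_nonneg x)]
    have := log_le_rpow_div (inv_nonneg.2 (norm_nonneg x)) (by norm_num : (0:ℝ) < 1 / 2)
    linarith
  · exact (by fun_prop : Measurable fun x : E => log (1 / ‖x‖)).aestronglyMeasurable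

end LogNorm

/-- Remark 6.1: `φ(z) = log(1/|z|)` has finite mean oscillation at the origin, yet its
mean values over `B(0,ε)` tend to `+∞` as `ε → 0`; in particular, boundedness of the
averages of `|φ|` is sufficient but not necessary for FMO. -/
theorem log_one_div_abs_fmo_at_zero :
    FMOAt (fun z : ℂ => Real.log (1 / ‖z‖)) 0 ∧
    Tendsto (fun ε : ℝ =>
        ⨍ z in ball (0 : ℂ) ε, Real.log (1 / ‖z‖) ∂volume)
      (𝓝[>] (0 : ℝ)) atTop ∧
    ¬ (∃ C : ℝ, ∀ᶠ ε in 𝓝[>] (0 : ℝ),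
        (⨍ z in ball (0 : ℂ) ε, |Real.log (1 / ‖z‖)| ∂volume) ≤ C) := by
  set ψ : ℂ → ℝ := fun z => Real.log (1 / ‖z‖)
  have hψ : IntegrableOn ψ (ball 0 1) volume := integrableOn_log_one_div_norm_ball volume
  have hscale : ∀ r > (0 : ℝ), ∀ᵐ z ∂volume.restrict (ball (0 : ℂ) 1),
      ψ (r • z) = ψ z + Real.log (1 / r) := fun r hr =>
    ae_restrict_of_ae ((Measure.ae_ne volume 0).mono fun z hz => log_one_div_norm_smul hr hz)
  have hlog : Tendsto (fun r : ℝ => Real.log (1 / r)) (𝓝[>] 0) atTop := by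
    simpa only [one_div, Function.comp_def] using
      Real.tendsto_log_atTop.comp tendsto_inv_nhdsGT_zero
  have htend : Tendsto (fun r : ℝ => ⨍ z in ball (0 : ℂ) r, ψ z ∂volume) (𝓝[>] 0) atTop := by
    refine (tendsto_atTop_add_const_left _ (⨍ z in ball (0 : ℂ) 1, ψ z) hlog).congr' ?_
    filter_upwards [self_mem_nhdsWithin] with r hr
    exact (setAverage_ball_zero_eq_add_of_comp_smul volume hr hψ (hscale r hr)).symm
  refine ⟨⟨meanOscillation volume (ball 0 1) ψ, ?_⟩, htend, ?_⟩
  · filter_upwards [self_mem_nhdsWithin] with r hr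
    exact (meanOscillation_ball_zero_eq_of_comp_smul volume hr hψ (hscale r hr)).le
  · rintro ⟨C, hC⟩
    obtain ⟨r, ⟨hCr, hgt⟩, hr1⟩ :=
      ((hC.and (htend.eventually_gt_atTop C)).and (Ioo_mem_nhdsGT one_pos)).exists
    have habs : ⨍ z in ball (0 : ℂ) r, |ψ z| ∂volume = ⨍ z in ball (0 : ℂ) r, ψ z ∂volume :=
      setAverage_congr_fun measurableSet_ball (.of_forall fun z hz =>
        abs_of_nonneg (log_one_div_norm_nonneg ((mem_ball_zero_iff.1 hz).le.trans hr1.2.le)))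
    linarith
end

section
/- Let Φ : [0,∞) → [0,∞) be nondecreasing and convex and set H(t) = log Φ(t). Then the condition ∫_{δ*}^∞ dτ / (τ Φ^{-1}(τ)) = ∞ for some δ* > Φ(0) is equivalent to the condition ∫_δ^∞ H(t) dt / t² = ∞ for some (equivalently, all) δ > t₀, where t₀ = sup{ t : Φ(t) = 0 } (t₀ = 0 if Φ(0) > 0). -/
open MeasureTheory Filter Set
open scoped ENNReal Topology

/-- The generalized inverse `Φ⁻¹(τ) = inf { t : Φ(t) ≥ τ }`. -/
noncomputable def genInv (Φ : ℝ → ℝ) (τ : ℝ) : ℝ := sInf {t : ℝ | 0 ≤ t ∧ τ ≤ Φ t}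

/-!
For `T > 0` with `Φ T > 0`, integrating `1 / (t² τ)` over `{(t, τ) : t > T, Φ T < τ ≤ Φ t}`
in both orders gives the exact identity
`∫_{Φ T}^∞ dτ / (τ Φ⁻¹(τ)) = ∫_T^∞ log (Φ t / Φ T) dt / t²`: the `τ`-section is `(Φ T, Φ t]`, and
the `t`-section lies between `(Φ⁻¹(τ), ∞)` and `[Φ⁻¹(τ), ∞)`. When `Φ T ≥ 1` the right side differs
from `∫_T^∞ H(t) dt / t²` by `log (Φ T) / T < ∞`. Moving a lower limit changes either integral by a
finite amount: `log Φ ≤ Φ` is bounded on compact intervals, and convexity makes `Φ` continuous at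
`0`, so `Φ⁻¹(τ) ≥ Φ⁻¹(a) > 0` for `τ ≥ a > Φ 0`.
-/

lemma lintegral_Ioi_ofReal_one_div_sq {a : ℝ} (ha : 0 < a) :
    ∫⁻ t in Ioi a, ENNReal.ofReal (1 / t ^ 2) = ENNReal.ofReal (1 / a) := by
  have hpow : EqOn (fun t : ℝ => t ^ (-2 : ℝ)) (fun t => 1 / t ^ 2) (Ioi a) := fun t ht => by
    show t ^ (-2 : ℝ) = 1 / t ^ 2
    rw [Real.rpow_neg (ha.trans ht).le, one_div]
    norm_cast
  have hint : IntegrableOn (fun t : ℝ => 1 / t ^ 2) (Ioi a) :=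
    (integrableOn_Ioi_rpow_of_lt (by norm_num) ha).congr_fun hpow measurableSet_Ioi
  rw [← ofReal_integral_eq_lintegral_ofReal hint
      (ae_restrict_of_forall_mem measurableSet_Ioi fun t _ => by positivity),
    ← setIntegral_congr_fun measurableSet_Ioi hpow, integral_Ioi_rpow_of_lt (by norm_num) ha]
  norm_num [Real.rpow_neg_one]

lemma lintegral_Ioc_ofReal_one_div {a b : ℝ} (ha : 0 < a) (hab : a ≤ b) :
    ∫⁻ τ in Ioc a b, ENNReal.ofReal (1 / τ) = ENNReal.ofReal (Real.log (b / a)) := by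
  have hint : IntegrableOn (fun τ : ℝ => 1 / τ) (Ioc a b) :=
    ((continuousOn_const.div continuousOn_id fun τ hτ =>
      (ha.trans_le hτ.1).ne').integrableOn_Icc).mono_set Ioc_subset_Icc_self
  rw [← ofReal_integral_eq_lintegral_ofReal hint
      (ae_restrict_of_forall_mem measurableSet_Ioc fun τ hτ => (one_div_pos.2 (ha.trans hτ.1)).le),
    ← intervalIntegral.integral_of_le hab, integral_one_div_of_pos ha (ha.trans_le hab)]

lemma setLIntegral_Ioi_eq_top_iff_of_le {μ : Measure ℝ} [IsLocallyFiniteMeasure μ]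
    {f : ℝ → ℝ≥0∞} {a b : ℝ} (hab : a ≤ b) {C : ℝ≥0∞} (hC : C ≠ ∞)
    (hf : ∀ x ∈ Ioc a b, f x ≤ C) :
    ∫⁻ x in Ioi a, f x ∂μ = ∞ ↔ ∫⁻ x in Ioi b, f x ∂μ = ∞ := by
  have hfin : ∫⁻ x in Ioc a b, f x ∂μ ≠ ∞ :=
    ne_top_of_le_ne_top (ENNReal.mul_ne_top hC measure_Ioc_lt_top.ne)
      ((setLIntegral_mono' measurableSet_Ioc hf).trans_eq (setLIntegral_const _ C))
  rw [← Ioc_union_Ioi_eq_Ioi hab, lintegral_union measurableSet_Ioi (Ioc_disjoint_Ioi le_rfl),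
    ENNReal.add_eq_top, or_iff_right hfin]

lemma ConvexOn.exists_pos_lt_of_apply_zero_lt {Φ : ℝ → ℝ} (hconv : ConvexOn ℝ (Ici 0) Φ)
    {a : ℝ} (ha : Φ 0 < a) : ∃ s > 0, Φ s < a := by
  have hlim : Tendsto (fun s : ℝ => (1 - s) * Φ 0 + s * Φ 1) (𝓝[>] 0) (𝓝 (Φ 0)) := by
    have hcont : Continuous fun s : ℝ => (1 - s) * Φ 0 + s * Φ 1 := by fun_prop
    simpa using (hcont.tendsto 0).mono_left nhdsWithin_le_nhds
  obtain ⟨s, hs, hsa⟩ :=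
    (Eventually.and (Ioo_mem_nhdsGT one_pos) (hlim.eventually (gt_mem_nhds ha))).exists
  refine ⟨s, hs.1, lt_of_le_of_lt ?_ hsa⟩
  simpa using hconv.2 self_mem_Ici (mem_Ici.2 zero_le_one) (sub_nonneg.2 hs.2.le) hs.1.le
    (by ring)

section GenInv

variable {Φ : ℝ → ℝ}

lemma genInv_set_nonempty (htop : Tendsto Φ atTop atTop) (τ : ℝ) :
    {t : ℝ | 0 ≤ t ∧ τ ≤ Φ t}.Nonempty :=
  ((htop.eventually_ge_atTop τ).and (eventually_ge_atTop 0)).exists.imp fun _ h => h.symm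

lemma genInv_le {t τ : ℝ} (ht : 0 ≤ t) (h : τ ≤ Φ t) : genInv Φ τ ≤ t :=
  csInf_le ⟨0, fun _ hs => hs.1⟩ ⟨ht, h⟩

lemma le_genInv (hmono : MonotoneOn Φ (Ici 0)) (htop : Tendsto Φ atTop atTop) {s τ : ℝ}
    (hs : 0 ≤ s) (h : Φ s < τ) : s ≤ genInv Φ τ :=
  le_csInf (genInv_set_nonempty htop τ) fun _ ht => le_of_not_gt fun hts =>
    (ht.2.trans (hmono ht.1 hs hts.le)).not_gt h

lemma le_apply_of_genInv_lt (hmono : MonotoneOn Φ (Ici 0)) (htop : Tendsto Φ atTop atTop)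
    {t τ : ℝ} (h : genInv Φ τ < t) : τ ≤ Φ t := by
  obtain ⟨s, hs, hst⟩ := exists_lt_of_csInf_lt (genInv_set_nonempty htop τ) h
  exact hs.2.trans (hmono hs.1 (hs.1.trans hst.le) hst.le)

lemma genInv_mono (htop : Tendsto Φ atTop atTop) : Monotone (genInv Φ) := fun _ τ' h =>
  csInf_le_csInf ⟨0, fun _ hs => hs.1⟩ (genInv_set_nonempty htop τ') fun _ ht =>
    ⟨ht.1, h.trans ht.2⟩

lemma genInv_pos (hmono : MonotoneOn Φ (Ici 0)) (htop : Tendsto Φ atTop atTop)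
    (hconv : ConvexOn ℝ (Ici 0) Φ) {τ : ℝ} (hτ : Φ 0 < τ) : 0 < genInv Φ τ := by
  obtain ⟨s, hs, hsτ⟩ := hconv.exists_pos_lt_of_apply_zero_lt hτ
  exact hs.trans_le (le_genInv hmono htop hs.le hsτ)

end GenInv

section Tails

variable {Φ : ℝ → ℝ}

lemma lintegral_inv_mul_genInv_Ioi_eq_top_iff (hmono : MonotoneOn Φ (Ici 0))
    (htop : Tendsto Φ atTop atTop) (hconv : ConvexOn ℝ (Ici 0) Φ) (h0 : 0 ≤ Φ 0) {a b : ℝ}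
    (ha : Φ 0 < a) (hb : Φ 0 < b) :
    ∫⁻ τ in Ioi a, ENNReal.ofReal (1 / (τ * genInv Φ τ)) = ∞ ↔
      ∫⁻ τ in Ioi b, ENNReal.ofReal (1 / (τ * genInv Φ τ)) = ∞ := by
  wlog hab : a ≤ b generalizing a b
  · exact (this hb ha (le_of_not_ge hab)).symm
  have ha0 : 0 < a := h0.trans_lt ha
  have hga : 0 < genInv Φ a := genInv_pos hmono htop hconv ha
  refine setLIntegral_Ioi_eq_top_iff_of_le hab (C := ENNReal.ofReal (1 / (a * genInv Φ a)))
    ENNReal.ofReal_ne_top fun τ hτ =>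
    ENNReal.ofReal_le_ofReal (one_div_le_one_div_of_le (by positivity) ?_)
  exact mul_le_mul hτ.1.le (genInv_mono htop hτ.1.le) hga.le (ha0.trans hτ.1).le

lemma lintegral_log_div_sq_Ioi_eq_top_iff (hmono : MonotoneOn Φ (Ici 0))
    (hnonneg : ∀ t ≥ 0, 0 ≤ Φ t) {a b : ℝ} (ha : 0 < a) (hb : 0 < b) :
    ∫⁻ t in Ioi a, ENNReal.ofReal (Real.log (Φ t) / t ^ 2) = ∞ ↔
      ∫⁻ t in Ioi b, ENNReal.ofReal (Real.log (Φ t) / t ^ 2) = ∞ := by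
  wlog hab : a ≤ b generalizing a b
  · exact (this hb ha (le_of_not_ge hab)).symm
  refine setLIntegral_Ioi_eq_top_iff_of_le hab (C := ENNReal.ofReal (Φ b / a ^ 2))
    ENNReal.ofReal_ne_top fun t ht => ENNReal.ofReal_le_ofReal ?_
  have ht0 : 0 < t := ha.trans ht.1
  exact div_le_div₀ (hnonneg b hb.le)
    ((Real.log_le_self (hnonneg t ht0.le)).trans (hmono ht0.le hb.le ht.2)) (by positivity)
    (pow_le_pow_left₀ ha.le ht.1.le 2)

end Tails

lemma MonotoneOn.measurableSet_setOf_le_of_Ici {Φ : ℝ → ℝ} (hmono : MonotoneOn Φ (Ici 0)) :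
    MeasurableSet {p : ℝ × ℝ | 0 ≤ p.1 ∧ p.2 ≤ Φ p.1} := by
  have hext : Monotone fun t => Φ (max t 0) := fun x y h =>
    hmono (le_max_right x 0) (le_max_right y 0) (max_le_max h le_rfl)
  have hset : {p : ℝ × ℝ | 0 ≤ p.1 ∧ p.2 ≤ Φ p.1} =
      {p | (0 : ℝ) ≤ p.1} ∩ {p | p.2 ≤ Φ (max p.1 0)} := by
    ext p
    exact and_congr_right fun h0 => by rw [mem_ofPred, max_eq_left h0]
  rw [hset]
  exact (measurableSet_le measurable_const measurable_fst).inter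
    (measurableSet_le measurable_snd (hext.measurable.comp measurable_fst))

lemma lintegral_inv_mul_genInv_eq {Φ : ℝ → ℝ} (hmono : MonotoneOn Φ (Ici 0))
    (htop : Tendsto Φ atTop atTop) {T : ℝ} (hT : 0 < T) (hΦT : 0 < Φ T) :
    ∫⁻ τ in Ioi (Φ T), ENNReal.ofReal (1 / (τ * genInv Φ τ)) =
      ∫⁻ t in Ioi T, ENNReal.ofReal (Real.log (Φ t / Φ T) / t ^ 2) := by
  set E := {p : ℝ × ℝ | 0 ≤ p.1 ∧ p.2 ≤ Φ p.1}
  set F : ℝ × ℝ → ℝ≥0∞ := E.indicator fun p => ENNReal.ofReal (1 / (p.1 ^ 2 * p.2))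
  have hF : Measurable F :=
    (Measurable.ennreal_ofReal (by fun_prop)).indicator hmono.measurableSet_setOf_le_of_Ici
  have hsplit (t τ : ℝ) : ENNReal.ofReal (1 / (t ^ 2 * τ)) =
      ENNReal.ofReal (1 / t ^ 2) * ENNReal.ofReal (1 / τ) := by
    rw [← ENNReal.ofReal_mul (by positivity), one_div_mul_one_div]
  have hinner_τ : EqOn (fun t => ∫⁻ τ in Ioi (Φ T), F (t, τ))
      (fun t => ENNReal.ofReal (Real.log (Φ t / Φ T) / t ^ 2)) (Ioi T) := fun t ht => by
    have ht0 : 0 ≤ t := hT.le.trans ht.le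
    have hslice : (fun τ => F (t, τ)) =
        (Iic (Φ t)).indicator fun τ => ENNReal.ofReal (1 / (t ^ 2 * τ)) := by
      ext τ
      simp only [F, E, indicator, mem_ofPred_eq, mem_Iic, ht0, true_and]
    simp only [hslice, setLIntegral_indicator measurableSet_Iic, Iic_inter_Ioi, hsplit]
    rw [lintegral_const_mul _ (by fun_prop), lintegral_Ioc_ofReal_one_div hΦT
      (hmono hT.le ht0 ht.le), ← ENNReal.ofReal_mul (by positivity), one_div_mul_eq_div]
  have hinner_t : EqOn (fun τ => ∫⁻ t in Ioi T, F (t, τ))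
      (fun τ => ENNReal.ofReal (1 / (τ * genInv Φ τ))) (Ioi (Φ T)) := fun τ hτ => by
    have hTg : T ≤ genInv Φ τ := le_genInv hmono htop hT.le hτ
    have hslice : ∫⁻ t in Ioi T, F (t, τ) =
        ∫⁻ t in Ioi (genInv Φ τ), ENNReal.ofReal (1 / (t ^ 2 * τ)) := by
      have hE : MeasurableSet ((fun t => (t, τ)) ⁻¹' E) :=
        hmono.measurableSet_setOf_le_of_Ici.preimage measurable_prodMk_right
      rw [show (fun t => F (t, τ)) = ((fun t => (t, τ)) ⁻¹' E).indicator
          fun t => ENNReal.ofReal (1 / (t ^ 2 * τ)) from rfl, setLIntegral_indicator hE]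
      refine setLIntegral_congr (EventuallyLE.antisymm ?_ ?_)
      · exact (LE.le.eventuallyLE fun t ht => genInv_le ht.1.1 ht.1.2).trans
          Ioi_ae_eq_Ici.symm.le
      · exact LE.le.eventuallyLE fun t ht =>
          ⟨⟨hT.le.trans (hTg.trans ht.le), le_apply_of_genInv_lt hmono htop ht⟩, hTg.trans_lt ht⟩
    simp only [hslice, hsplit]
    rw [lintegral_mul_const _ (by fun_prop), lintegral_Ioi_ofReal_one_div_sq (hT.trans_le hTg),
      ← ENNReal.ofReal_mul (one_div_pos.2 (hT.trans_le hTg)).le, one_div_mul_one_div, mul_comm]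
  rw [← setLIntegral_congr_fun measurableSet_Ioi hinner_t,
    ← setLIntegral_congr_fun measurableSet_Ioi hinner_τ]
  exact (lintegral_lintegral_swap (f := fun t τ => F (t, τ)) hF.aemeasurable).symm

lemma lintegral_log_div_sq_eq {Φ : ℝ → ℝ} (hmono : MonotoneOn Φ (Ici 0))
    (htop : Tendsto Φ atTop atTop) {T : ℝ} (hT : 0 < T) (hΦT : 1 ≤ Φ T) :
    ∫⁻ t in Ioi T, ENNReal.ofReal (Real.log (Φ t) / t ^ 2) =
      (∫⁻ τ in Ioi (Φ T), ENNReal.ofReal (1 / (τ * genInv Φ τ))) +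
        ENNReal.ofReal (Real.log (Φ T) / T) := by
  have hΦT0 : 0 < Φ T := one_pos.trans_le hΦT
  have hsplit : EqOn (fun t => ENNReal.ofReal (Real.log (Φ t) / t ^ 2))
      (fun t => ENNReal.ofReal (Real.log (Φ t / Φ T) / t ^ 2) +
        ENNReal.ofReal (Real.log (Φ T)) * ENNReal.ofReal (1 / t ^ 2)) (Ioi T) := fun t ht => by
    have hΦ : Φ T ≤ Φ t := hmono hT.le (hT.trans ht).le ht.le
    have hlog : 0 ≤ Real.log (Φ t / Φ T) := Real.log_nonneg ((one_le_div hΦT0).2 hΦ)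
    dsimp only
    rw [← ENNReal.ofReal_mul (Real.log_nonneg hΦT),
      ← ENNReal.ofReal_add (div_nonneg hlog (sq_nonneg t))
        (mul_nonneg (Real.log_nonneg hΦT) (by positivity)),
      mul_one_div, ← add_div, Real.log_div (hΦT0.trans_le hΦ).ne' hΦT0.ne', sub_add_cancel]
  rw [setLIntegral_congr_fun measurableSet_Ioi hsplit, lintegral_add_right _ (by fun_prop),
    lintegral_const_mul _ (by fun_prop), lintegral_Ioi_ofReal_one_div_sq hT,
    ← ENNReal.ofReal_mul (Real.log_nonneg hΦT), mul_one_div,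
    ← lintegral_inv_mul_genInv_eq hmono htop hT hΦT0]

/-- For a nondecreasing convex `Φ : [0,∞) → [0,∞)` with `Φ(t) → ∞`, and `H = log Φ`,
the condition `∫_{δ*}^∞ dτ/(τ Φ⁻¹(τ)) = ∞` for some `δ* > Φ(0)` is equivalent to
`∫_δ^∞ H(t) dt/t² = ∞` for some (equivalently, all) `δ > t₀`,
where `t₀ = sup{t : Φ(t) = 0}` (equal to `0` when `Φ(0) > 0`). -/
theorem inverse_integral_iff_log_integral
    (Φ : ℝ → ℝ) (hmono : MonotoneOn Φ (Ici (0 : ℝ)))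
    (hconv : ConvexOn ℝ (Ici (0 : ℝ)) Φ)
    (hnonneg : ∀ t ≥ (0 : ℝ), 0 ≤ Φ t)
    (htop : Tendsto Φ atTop atTop)
    (t₀ : ℝ) (ht₀ : t₀ = sSup {t : ℝ | 0 ≤ t ∧ Φ t = 0}) :
    ((∃ δ₀ > Φ 0, ∫⁻ τ in Ioi δ₀, ENNReal.ofReal (1 / (τ * genInv Φ τ)) = ⊤) ↔
      (∀ δ > t₀, ∫⁻ t in Ioi δ, ENNReal.ofReal (Real.log (Φ t) / t ^ 2) = ⊤)) ∧
    ((∃ δ > t₀, ∫⁻ t in Ioi δ, ENNReal.ofReal (Real.log (Φ t) / t ^ 2) = ⊤) ↔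
      (∀ δ > t₀, ∫⁻ t in Ioi δ, ENNReal.ofReal (Real.log (Φ t) / t ^ 2) = ⊤)) := by
  have ht₀ : 0 ≤ t₀ := ht₀ ▸ Real.sSup_nonneg fun t ht => ht.1
  have hB {a b : ℝ} (ha : t₀ < a) (hb : t₀ < b) :=
    lintegral_log_div_sq_Ioi_eq_top_iff hmono hnonneg (ht₀.trans_lt ha) (ht₀.trans_lt hb)
  obtain ⟨T, hΦT, hTt₀⟩ :=
    ((htop.eventually_ge_atTop (max 1 (Φ 0 + 1))).and (eventually_gt_atTop t₀)).exists
  have hΦT1 : 1 ≤ Φ T := (le_max_left _ _).trans hΦT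
  have hΦ0T : Φ 0 < Φ T := (lt_add_one _).trans_le ((le_max_right _ _).trans hΦT)
  have hkey : ∫⁻ τ in Ioi (Φ T), ENNReal.ofReal (1 / (τ * genInv Φ τ)) = ⊤ ↔
      ∫⁻ t in Ioi T, ENNReal.ofReal (Real.log (Φ t) / t ^ 2) = ⊤ := by
    rw [lintegral_log_div_sq_eq hmono htop (ht₀.trans_lt hTt₀) hΦT1, ENNReal.add_eq_top,
      or_iff_left ENNReal.ofReal_ne_top]
  refine ⟨⟨?_, fun h => ⟨Φ T, hΦ0T, hkey.2 (h T hTt₀)⟩⟩,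
    ⟨?_, fun h => ⟨t₀ + 1, lt_add_one t₀, h _ (lt_add_one t₀)⟩⟩⟩
  · rintro ⟨δ₀, hδ₀, h⟩ δ hδ
    have hA := lintegral_inv_mul_genInv_Ioi_eq_top_iff hmono htop hconv (hnonneg 0 le_rfl) hδ₀ hΦ0T
    exact (hB hTt₀ hδ).1 (hkey.1 (hA.1 h))
  · rintro ⟨δ, hδ, h⟩ δ' hδ'
    exact (hB hδ hδ').1 h
end

section
/- Every QED-domain in ℂ has a weakly flat boundary: if D ⊆ ℂ satisfies M(Δ(E,F;ℂ̄)) ≤ K·M(Δ(E,F;D)) for some K ≥ 1 and all pairs of disjoint continua E, F ⊂ D, then for every z₀ ∈ ∂D, every neighborhood U of z₀, and every P > 0, there is a neighborhood V ⊆ U of z₀ such that M(Δ(E,F;D)) ≥ P for all continua E, F in D intersecting both ∂U and ∂V. -/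
open MeasureTheory Metric Filter Set
open scoped ENNReal Topology

/-- A (piecewise-smooth) parametrized curve in the plane. -/
structure PlaneCurve where
  a : ℝ
  b : ℝ
  hab : a ≤ b
  γ : ℝ → ℂ
  cont : ContinuousOn γ (Set.Icc a b)
  diff : DifferentiableOn ℝ γ (Set.Ioo a b)

/-- The line integral `∫_γ ϱ ds` of a density `ϱ` along a curve. -/
noncomputable def lineIntegral (ϱ : ℂ → ℝ≥0∞) (c : PlaneCurve) : ℝ≥0∞ :=
  ∫⁻ t in Set.Ioo c.a c.b, ϱ (c.γ t) * ENNReal.ofReal ‖deriv c.γ t‖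

/-- `ϱ` is admissible for the curve family `Γ`: `∫_γ ϱ ds ≥ 1` for every `γ ∈ Γ`. -/
def IsAdmissible (Γ : Set PlaneCurve) (ϱ : ℂ → ℝ≥0∞) : Prop :=
  Measurable ϱ ∧ ∀ c ∈ Γ, 1 ≤ lineIntegral ϱ c

/-- The conformal modulus `M(Γ)` of a family of curves `Γ` in `ℂ`. -/
noncomputable def modulus (Γ : Set PlaneCurve) : ℝ≥0∞ :=
  ⨅ (ϱ : ℂ → ℝ≥0∞) (_ : IsAdmissible Γ ϱ), ∫⁻ z, (ϱ z) ^ 2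

/-- The family `Δ(E,F;D)` of curves joining `E` and `F` in `D`:
endpoints in `E` and `F` respectively, interior in `D`. -/
def joining (E F D : Set ℂ) : Set PlaneCurve :=
  {c | c.γ c.a ∈ E ∧ c.γ c.b ∈ F ∧ ∀ t ∈ Set.Ioo c.a c.b, c.γ t ∈ D}

/-!
Let `V` be the disc `|z - z₀| < r` with `r = R e^{-2πKP}`, where the disc of radius `R` lies in
`U`. Continua `E`, `F` meeting `∂U` and `∂V` meet every circle `|z - z₀| = ρ`, `r < ρ < R`, so for
an admissible `ϱ` an arc of that circle from `E` to `F` gives `1 ≤ ρ ∫ ϱ(z₀ + ρe^{iθ}) dθ`. By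
Cauchy–Schwarz `1/(2πρ) ≤ ∫ ϱ² ρ dθ`, and integrating over `ρ` in polar coordinates gives
`M(Δ(E,F;ℂ)) ≥ log(R/r)/(2π) = KP`; the QED inequality then yields `M(Δ(E,F;D)) ≥ P`.
-/

open scoped Real

theorem sq_lintegral_le_measure_univ_mul_lintegral_sq {α : Type*} [MeasurableSpace α]
    {μ : Measure α} {f : α → ℝ≥0∞} (hf : AEMeasurable f μ) :
    (∫⁻ x, f x ∂μ) ^ 2 ≤ μ univ * ∫⁻ x, f x ^ 2 ∂μ := by
  have hCS := ENNReal.lintegral_mul_le_Lp_mul_Lq μ Real.HolderConjugate.two_two hf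
    (aemeasurable_const (b := (1 : ℝ≥0∞)))
  simp only [Pi.mul_apply, mul_one, ENNReal.one_rpow, lintegral_const, one_mul] at hCS
  have hsq : ∀ x : ℝ≥0∞, (x ^ (1 / 2 : ℝ)) ^ 2 = x := fun x => by
    rw [← ENNReal.rpow_natCast, ← ENNReal.rpow_mul]; norm_num
  calc (∫⁻ x, f x ∂μ) ^ 2
      ≤ ((∫⁻ x, f x ^ (2 : ℝ) ∂μ) ^ (1 / 2 : ℝ) * μ univ ^ (1 / 2 : ℝ)) ^ 2 := by gcongr
    _ = μ univ * ∫⁻ x, f x ^ 2 ∂μ := by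
      simp only [mul_pow, hsq, ENNReal.rpow_two, mul_comm]

theorem lintegral_Ioo_ofReal_inv {a b : ℝ} (ha : 0 < a) (hab : a ≤ b) :
    ∫⁻ x in Ioo a b, ENNReal.ofReal x⁻¹ = ENNReal.ofReal (Real.log (b / a)) := by
  have hint : IntegrableOn (fun x : ℝ => x⁻¹) (Ioo a b) :=
    ((continuousOn_inv₀.mono fun x hx => (ha.trans_le hx.1).ne').integrableOn_Icc).mono_set
      Ioo_subset_Icc_self
  rw [← ofReal_integral_eq_lintegral_ofReal hint, integral_Ioc_eq_integral_Ioo.symm,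
    ← intervalIntegral.integral_of_le hab, integral_inv_of_pos ha (ha.trans_le hab)]
  exact (ae_restrict_iff' measurableSet_Ioo).2 (.of_forall fun x hx => by
    simpa using (ha.trans hx.1).le)

theorem setLIntegral_comp_neg_Ioo (f : ℝ → ℝ≥0∞) (a b : ℝ) :
    ∫⁻ t in Ioo (-b) (-a), f (-t) = ∫⁻ t in Ioo a b, f t := by
  have h := (Measure.measurePreserving_neg (volume : Measure ℝ)).setLIntegral_comp_emb
    (MeasurableEquiv.neg ℝ).measurableEmbedding f (Ioo (-b) (-a))
  simpa using h

theorem lintegral_comp_circleMap_polarCoord (z₀ : ℂ) (g : ℂ → ℝ≥0∞) :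
    ∫⁻ p in polarCoord.target, ENNReal.ofReal p.1 * g (circleMap z₀ p.1 p.2) = ∫⁻ z, g z := by
  rw [← lintegral_add_left_eq_self (f := g) z₀, ← Complex.lintegral_comp_polarCoord_symm]
  refine setLIntegral_congr_fun polarCoord.open_target.measurableSet fun p _ => ?_
  simp [circleMap, Complex.exp_mul_I]

theorem circleMap_norm_sub_arg_sub (z₀ z : ℂ) : circleMap z₀ ‖z - z₀‖ (z - z₀).arg = z := by
  simp [circleMap, Complex.norm_mul_exp_arg_mul_I]

theorem hasDerivAt_circleMap_mul (z₀ : ℂ) (ρ s t : ℝ) :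
    HasDerivAt (fun t => circleMap z₀ ρ (s * t))
      ((s : ℂ) * (circleMap 0 ρ (s * t) * Complex.I)) t := by
  simpa [Function.comp_def] using
    (hasDerivAt_circleMap z₀ ρ (s * t)).scomp t ((hasDerivAt_id t).const_mul s)

/-- With `s = ±1` the arc can be traversed in either direction, so it can start at either of
two given points of the circle. -/
noncomputable def circleArc (z₀ : ℂ) (ρ s a b : ℝ) (hab : a ≤ b) : PlaneCurve where
  a := a
  b := b
  hab := hab
  γ t := circleMap z₀ ρ (s * t)
  cont := fun t _ => (hasDerivAt_circleMap_mul z₀ ρ s t).continuousAt.continuousWithinAt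
  diff := fun t _ => (hasDerivAt_circleMap_mul z₀ ρ s t).differentiableAt.differentiableWithinAt

theorem lineIntegral_circleArc (ϱ : ℂ → ℝ≥0∞) (z₀ : ℂ) (ρ s : ℝ) {a b : ℝ} (hab : a ≤ b) :
    lineIntegral ϱ (circleArc z₀ ρ s a b hab) =
      ENNReal.ofReal (|ρ| * |s|) * ∫⁻ t in Ioo a b, ϱ (circleMap z₀ ρ (s * t)) := by
  have hnorm : ∀ t, ‖deriv (circleArc z₀ ρ s a b hab).γ t‖ = |ρ| * |s| := fun t => by
    simp [circleArc, (hasDerivAt_circleMap_mul z₀ ρ s t).deriv, mul_comm]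
  simp only [lineIntegral, hnorm]
  rw [lintegral_mul_const' _ _ ENNReal.ofReal_ne_top]
  exact mul_comm _ _

theorem exists_joining_circleMap_lineIntegral_le (ϱ : ℂ → ℝ≥0∞) (z₀ : ℂ) {ρ : ℝ} (hρ : 0 ≤ ρ)
    {θ₁ θ₂ : ℝ} (h₁ : θ₁ ∈ Ioc (-π) π) (h₂ : θ₂ ∈ Ioc (-π) π) :
    ∃ c ∈ joining {circleMap z₀ ρ θ₁} {circleMap z₀ ρ θ₂} univ,
      lineIntegral ϱ c ≤ ENNReal.ofReal ρ * ∫⁻ θ in Ioo (-π) π, ϱ (circleMap z₀ ρ θ) := by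
  rcases le_or_gt θ₁ θ₂ with h | h
  · refine ⟨circleArc z₀ ρ 1 θ₁ θ₂ h, by simp [joining, circleArc], ?_⟩
    rw [lineIntegral_circleArc]
    simp only [abs_one, mul_one, one_mul, abs_of_nonneg hρ]
    gcongr ENNReal.ofReal ρ * ?_
    exact lintegral_mono_set (Ioo_subset_Ioo h₁.1.le h₂.2)
  · have h' : -θ₁ ≤ -θ₂ := by linarith
    refine ⟨circleArc z₀ ρ (-1) (-θ₁) (-θ₂) h', by simp [joining, circleArc], ?_⟩
    rw [lineIntegral_circleArc]
    simp only [abs_neg, abs_one, mul_one, neg_one_mul, abs_of_nonneg hρ]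
    rw [setLIntegral_comp_neg_Ioo (fun θ => ϱ (circleMap z₀ ρ θ))]
    gcongr ENNReal.ofReal ρ * ?_
    exact lintegral_mono_set (Ioo_subset_Ioo h₂.1.le h₁.2)

theorem one_le_mul_lintegral_circleMap {ϱ : ℂ → ℝ≥0∞} {E F : Set ℂ}
    (hϱ : ∀ c ∈ joining E F univ, 1 ≤ lineIntegral ϱ c) {z₀ : ℂ} {ρ : ℝ} (hρ : 0 ≤ ρ)
    (hE : (E ∩ sphere z₀ ρ).Nonempty) (hF : (F ∩ sphere z₀ ρ).Nonempty) :
    1 ≤ ENNReal.ofReal ρ * ∫⁻ θ in Ioo (-π) π, ϱ (circleMap z₀ ρ θ) := by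
  obtain ⟨e, heE, he⟩ := hE
  obtain ⟨f, hfF, hf⟩ := hF
  rw [mem_sphere, dist_eq_norm] at he hf
  obtain ⟨c, ⟨hca, hcb, -⟩, hc⟩ := exists_joining_circleMap_lineIntegral_le ϱ z₀ hρ
    ⟨(e - z₀).neg_pi_lt_arg, (e - z₀).arg_le_pi⟩ ⟨(f - z₀).neg_pi_lt_arg, (f - z₀).arg_le_pi⟩
  rw [mem_singleton_iff, ← he, circleMap_norm_sub_arg_sub] at hca
  rw [mem_singleton_iff, ← hf, circleMap_norm_sub_arg_sub] at hcb
  exact (hϱ c ⟨hca ▸ heE, hcb ▸ hfF, fun _ _ => trivial⟩).trans hc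

theorem ofReal_inv_le_two_pi_mul_lintegral_sq_circleMap {ϱ : ℂ → ℝ≥0∞} (hm : Measurable ϱ)
    {E F : Set ℂ} (hϱ : ∀ c ∈ joining E F univ, 1 ≤ lineIntegral ϱ c) {z₀ : ℂ} {ρ : ℝ}
    (hρ : 0 < ρ) (hE : (E ∩ sphere z₀ ρ).Nonempty) (hF : (F ∩ sphere z₀ ρ).Nonempty) :
    ENNReal.ofReal ρ⁻¹ ≤
      ENNReal.ofReal (2 * π) *
        ∫⁻ θ in Ioo (-π) π, ENNReal.ofReal ρ * ϱ (circleMap z₀ ρ θ) ^ 2 := by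
  set c := ENNReal.ofReal ρ
  set a := ∫⁻ θ in Ioo (-π) π, ϱ (circleMap z₀ ρ θ)
  set A := ∫⁻ θ in Ioo (-π) π, ϱ (circleMap z₀ ρ θ) ^ 2
  have h_one : 1 ≤ c * a := one_le_mul_lintegral_circleMap hϱ hρ.le hE hF
  have h_cs : a ^ 2 ≤ ENNReal.ofReal (2 * π) * A := by
    have := sq_lintegral_le_measure_univ_mul_lintegral_sq (μ := volume.restrict (Ioo (-π) π))
      (hm.comp (continuous_circleMap z₀ ρ).measurable).aemeasurable
    rwa [Measure.restrict_apply_univ, Real.volume_Ioo, sub_neg_eq_add, ← two_mul] at this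
  have hc : c ≠ 0 := by simpa [c] using hρ
  rw [ENNReal.ofReal_inv_of_pos hρ, ENNReal.inv_le_iff_le_mul (fun _ => hc)
    (fun h => absurd h ENNReal.ofReal_ne_top), lintegral_const_mul' _ _ ENNReal.ofReal_ne_top]
  calc 1 ≤ (c * a) ^ 2 := one_le_pow₀ h_one
    _ = c * c * a ^ 2 := by ring
    _ ≤ c * c * (ENNReal.ofReal (2 * π) * A) := by gcongr
    _ = c * (ENNReal.ofReal (2 * π) * (c * A)) := by ring

theorem ofReal_log_le_two_pi_mul_lintegral_sq {E F : Set ℂ} {ϱ : ℂ → ℝ≥0∞}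
    (hϱ : IsAdmissible (joining E F univ) ϱ) {z₀ : ℂ} {r R : ℝ} (hr : 0 < r) (hrR : r ≤ R)
    (hE : ∀ ρ ∈ Ioo r R, (E ∩ sphere z₀ ρ).Nonempty)
    (hF : ∀ ρ ∈ Ioo r R, (F ∩ sphere z₀ ρ).Nonempty) :
    ENNReal.ofReal (Real.log (R / r)) ≤ ENNReal.ofReal (2 * π) * ∫⁻ z, ϱ z ^ 2 := by
  obtain ⟨hm, hadm⟩ := hϱ
  have hmeas : Measurable fun p : ℝ × ℝ => ENNReal.ofReal p.1 * ϱ (circleMap z₀ p.1 p.2) ^ 2 :=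
    (ENNReal.measurable_ofReal.comp measurable_fst).mul
      ((hm.comp (Real.circleMap.continuous (c := z₀)).measurable).pow_const 2)
  calc ENNReal.ofReal (Real.log (R / r))
      = ∫⁻ ρ in Ioo r R, ENNReal.ofReal ρ⁻¹ := (lintegral_Ioo_ofReal_inv hr hrR).symm
    _ ≤ ∫⁻ ρ in Ioo r R, ENNReal.ofReal (2 * π) *
          ∫⁻ θ in Ioo (-π) π, ENNReal.ofReal ρ * ϱ (circleMap z₀ ρ θ) ^ 2 :=
      setLIntegral_mono' measurableSet_Ioo fun ρ hρ =>
        ofReal_inv_le_two_pi_mul_lintegral_sq_circleMap hm hadm (hr.trans hρ.1) (hE ρ hρ)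
          (hF ρ hρ)
    _ = ENNReal.ofReal (2 * π) * ∫⁻ p in Ioo r R ×ˢ Ioo (-π) π,
          ENNReal.ofReal p.1 * ϱ (circleMap z₀ p.1 p.2) ^ 2 := by
      rw [lintegral_const_mul' _ _ ENNReal.ofReal_ne_top, Measure.volume_eq_prod,
        setLIntegral_prod _ hmeas.aemeasurable]
    _ ≤ ENNReal.ofReal (2 * π) * ∫⁻ p in polarCoord.target,
          ENNReal.ofReal p.1 * ϱ (circleMap z₀ p.1 p.2) ^ 2 := by
      gcongr ENNReal.ofReal (2 * π) * ?_
      exact lintegral_mono_set (prod_mono (fun ρ hρ => hr.trans hρ.1) subset_rfl)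
    _ = ENNReal.ofReal (2 * π) * ∫⁻ z, ϱ z ^ 2 := by
      rw [lintegral_comp_circleMap_polarCoord z₀ fun z => ϱ z ^ 2]

theorem ofReal_log_div_le_modulus_joining {E F : Set ℂ} {z₀ : ℂ} {r R : ℝ} (hr : 0 < r)
    (hrR : r ≤ R) (hE : ∀ ρ ∈ Ioo r R, (E ∩ sphere z₀ ρ).Nonempty)
    (hF : ∀ ρ ∈ Ioo r R, (F ∩ sphere z₀ ρ).Nonempty) :
    ENNReal.ofReal (Real.log (R / r) / (2 * π)) ≤ modulus (joining E F univ) := by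
  refine le_iInf₂ fun ϱ hϱ => ?_
  rw [ENNReal.ofReal_div_of_pos Real.two_pi_pos]
  exact ENNReal.div_le_of_le_mul' (ofReal_log_le_two_pi_mul_lintegral_sq hϱ hr hrR hE hF)

theorem modulus_joining_eq_top_of_not_disjoint {E F D : Set ℂ} (h : ¬Disjoint E F) :
    modulus (joining E F D) = ⊤ := by
  obtain ⟨z, hzE, hzF⟩ := not_disjoint_iff.1 h
  let c : PlaneCurve := ⟨0, 0, le_rfl, fun _ => z, continuousOn_const, differentiableOn_const z⟩
  have hc : c ∈ joining E F D := ⟨hzE, hzF, by simp [c]⟩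
  refine iInf₂_eq_top.2 fun ϱ hϱ => absurd (hϱ.2 c hc) ?_
  simp [c, lineIntegral]

theorem inter_sphere_nonempty_of_isPreconnected {α : Type*} [PseudoMetricSpace α] {G U : Set α}
    (hG : IsPreconnected G) {z₀ : α} {r R ρ : ℝ} (hU : ball z₀ R ⊆ U)
    (hGU : (G ∩ frontier U).Nonempty) (hGr : (G ∩ sphere z₀ r).Nonempty) (hρ : ρ ∈ Icc r R) :
    (G ∩ sphere z₀ ρ).Nonempty := by
  obtain ⟨x, hxG, hx⟩ := hGr
  obtain ⟨y, hyG, hy⟩ := hGU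
  have hRy : R ≤ dist y z₀ :=
    not_lt.1 fun h => hy.2 (interior_maximal hU isOpen_ball (mem_ball.2 h))
  rw [mem_sphere] at hx
  exact hG.intermediate_value hxG hyG (continuous_id.dist continuous_const).continuousOn
    ⟨hx ▸ hρ.1, hρ.2.trans hRy⟩

theorem qed_domain_weakly_flat_general
    (D : Set ℂ)
    (K : ℝ) (hK : 1 ≤ K)
    (hQED : ∀ E F : Set ℂ, E ⊆ D → F ⊆ D → IsCompact E → IsConnected E →
      IsCompact F → IsConnected F → Disjoint E F →
      modulus (joining E F Set.univ) ≤ ENNReal.ofReal K * modulus (joining E F D)) :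
    ∀ z₀ ∈ frontier D, ∀ U ∈ 𝓝 z₀, ∀ P : ℝ, 0 < P →
      ∃ V ∈ 𝓝 z₀, V ⊆ U ∧
        ∀ E F : Set ℂ, E ⊆ D → F ⊆ D → IsCompact E → IsConnected E →
          IsCompact F → IsConnected F →
          (E ∩ frontier U).Nonempty → (E ∩ frontier V).Nonempty →
          (F ∩ frontier U).Nonempty → (F ∩ frontier V).Nonempty →
          ENNReal.ofReal P ≤ modulus (joining E F D) := by
  intro z₀ _ U hU P hP
  obtain ⟨R, hR, hRU⟩ := Metric.mem_nhds_iff.1 hU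
  have hK₀ : 0 < K := one_pos.trans_le hK
  set r := R * Real.exp (-(2 * π * (K * P)))
  have hr : 0 < r := by positivity
  have hrR : r ≤ R :=
    mul_le_of_le_one_right hR.le (Real.exp_le_one_iff.2 (neg_nonpos.2 (by positivity)))
  have hlog : Real.log (R / r) / (2 * π) = K * P := by
    rw [div_mul_cancel_left₀ hR.ne', ← Real.exp_neg, neg_neg, Real.log_exp]
    field_simp
  refine ⟨ball z₀ r, ball_mem_nhds z₀ hr, (ball_subset_ball hrR).trans hRU, ?_⟩
  intro E F hED hFD hEc hEconn hFc hFconn hEU hEV hFU hFV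
  by_cases hEF : Disjoint E F
  swap
  · simp [modulus_joining_eq_top_of_not_disjoint hEF]
  rw [frontier_ball z₀ hr.ne'] at hEV hFV
  have hmod := (ofReal_log_div_le_modulus_joining hr hrR
    (fun ρ hρ => inter_sphere_nonempty_of_isPreconnected hEconn.isPreconnected hRU hEU hEV
      (Ioo_subset_Icc_self hρ))
    (fun ρ hρ => inter_sphere_nonempty_of_isPreconnected hFconn.isPreconnected hRU hFU hFV
      (Ioo_subset_Icc_self hρ))).trans (hQED E F hED hFD hEc hEconn hFc hFconn hEF)
  rw [hlog, ENNReal.ofReal_mul hK₀.le] at hmod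
  exact (ENNReal.mul_le_mul_iff_right (by simpa using hK₀) ENNReal.ofReal_ne_top).1 hmod

/-- Every QED-domain in `ℂ` has a weakly flat boundary. -/
theorem qed_domain_weakly_flat
    (D : Set ℂ) (hD : IsOpen D) (hDconn : IsConnected D)
    (K : ℝ) (hK : 1 ≤ K)
    (hQED : ∀ E F : Set ℂ, E ⊆ D → F ⊆ D → IsCompact E → IsConnected E →
      IsCompact F → IsConnected F → Disjoint E F →
      modulus (joining E F Set.univ) ≤ ENNReal.ofReal K * modulus (joining E F D)) :
    ∀ z₀ ∈ frontier D, ∀ U ∈ 𝓝 z₀, ∀ P : ℝ, 0 < P →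
      ∃ V ∈ 𝓝 z₀, V ⊆ U ∧
        ∀ E F : Set ℂ, E ⊆ D → F ⊆ D → IsCompact E → IsConnected E →
          IsCompact F → IsConnected F →
          (E ∩ frontier U).Nonempty → (E ∩ frontier V).Nonempty →
          (F ∩ frontier U).Nonempty → (F ∩ frontier V).Nonempty →
          ENNReal.ofReal P ≤ modulus (joining E F D) :=
  qed_domain_weakly_flat_general D K hK hQED
end

section
/- Let D ⊆ ℂ be a domain that is weakly flat at a point z₀ ∈ ∂D. Then z₀ is strongly accessible from D: for every neighborhood U of z₀ there exist a compact set E ⊂ D, a neighborhood V ⊂ U of z₀, and δ > 0 such that M(Δ(E,F;D)) ≥ δ for every continuum F in D intersecting both ∂U and ∂V. -/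
open MeasureTheory Metric Filter Set
open scoped ENNReal Topology

/-- If a domain `D ⊆ ℂ` is weakly flat at `z₀ ∈ ∂D`, then `z₀` is strongly
accessible from `D`. -/
theorem strongly_accessible_of_weakly_flat
    (D : Set ℂ) (hD : IsOpen D) (hDconn : IsConnected D)
    (z₀ : ℂ) (hz₀ : z₀ ∈ frontier D)
    (hwf : ∀ U ∈ 𝓝 z₀, ∀ P : ℝ, 0 < P →
      ∃ V ∈ 𝓝 z₀, V ⊆ U ∧
        ∀ E F : Set ℂ, E ⊆ D → F ⊆ D → IsCompact E → IsConnected E →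
          IsCompact F → IsConnected F →
          (E ∩ frontier U).Nonempty → (E ∩ frontier V).Nonempty →
          (F ∩ frontier U).Nonempty → (F ∩ frontier V).Nonempty →
          ENNReal.ofReal P ≤ modulus (joining E F D)) :
    ∀ U ∈ 𝓝 z₀,
      ∃ E : Set ℂ, E ⊆ D ∧ IsCompact E ∧
        ∃ V ∈ 𝓝 z₀, V ⊆ U ∧ ∃ δ : ℝ, 0 < δ ∧
          ∀ F : Set ℂ, F ⊆ D → IsCompact F → IsConnected F →
            (F ∩ frontier U).Nonempty → (F ∩ frontier V).Nonempty →
            ENNReal.ofReal δ ≤ modulus (joining E F D) := by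
  intro U hU
  obtain ⟨V, hV, hVU, hbound⟩ := hwf U hU 1 one_pos
  by_cases hDU : (D ∩ frontier U).Nonempty
  · by_cases hDV : (D ∩ frontier V).Nonempty
    · obtain ⟨p, hpD, hpU⟩ := hDU
      obtain ⟨q, hqD, hqV⟩ := hDV
      have hpc : IsPathConnected D := hD.isConnected_iff_isPathConnected.mp hDconn
      obtain ⟨γ, hγ⟩ := hpc.joinedIn p hpD q hqD
      refine ⟨Set.range γ, ?_, isCompact_range γ.continuous, V, hV, hVU, 1, one_pos, ?_⟩
      · rintro _ ⟨t, rfl⟩; exact hγ t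
      · intro F hFD hFc hFconn hFU hFV
        exact hbound (Set.range γ) F (by rintro _ ⟨t, rfl⟩; exact hγ t) hFD
          (isCompact_range γ.continuous) (isConnected_range γ.continuous)
          hFc hFconn ⟨p, ⟨0, γ.source⟩, hpU⟩ ⟨q, ⟨1, γ.target⟩, hqV⟩ hFU hFV
    · refine ⟨∅, Set.empty_subset _, isCompact_empty, V, hV, hVU, 1, one_pos, ?_⟩
      intro F hFD _ _ _ hFV
      exact absurd ⟨hFV.choose, hFD hFV.choose_spec.1, hFV.choose_spec.2⟩ hDV
  · refine ⟨∅, Set.empty_subset _, isCompact_empty, V, hV, hVU, 1, one_pos, ?_⟩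
    intro F hFD _ _ hFU _
    exact absurd ⟨hFU.choose, hFD hFU.choose_spec.1, hFU.choose_spec.2⟩ hDU
end
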